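/- For every integer n ≥ 4 and all real parameters γ, β, the level-1 QAOA approximation ratio on K_{2n} is bounded as ((2n−1)/n)·(1/2 + f_n(γ,β)) < 1 − 1/(2n(4n−1)) < 1 − 1/(8n²). In particular, the approximation ratio of level-1 QAOA for MAX-CUT on K_{2n} is strictly less than 1 − 1/(8n²). -/

import Mathlib

/-!
Write `m = 2n - 2`, `K = 2m + 3 = 4n - 1`, `S = sin γ cos^m γ`, `T = 1 - cos^m 2γ`, and
`(p, q) = (sin 2β, cos 2β)`. Then `f_n = S p q - p² T / 4` is a quadratic form on the unit circle,
and its maximum is `< 1/K` exactly when `K² S² < 4 + K T`; an explicit sum of squares certifies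
this. With `x = cos² γ` the latter reads `K² (1 - x) x^m < 4 + K (1 - (2x - 1)^m)`. For `x ≤ 1/2`
the left side is below `K² / 2^m < 4`; for `x > 1/2` we have `(2x - 1)^m ≤ x^(2m)`, and the
AM-GM bound `2m (1 - x) x^m ≤ 1 - x^(2m)` finishes. Finally the ratio is increasing in `f_n`, and
at `f_n = 1/(4n - 1)` it equals `1 - 1/(2n(4n - 1))`.
-/

open Real

/-- The deviation from `1/2` of the per-edge expectation value of the level-1 QAOA
for MAX-CUT on the complete graph `K_{2n}`. -/
noncomputable def qaoaF (n : ℕ) (γ β : ℝ) : ℝ :=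
  (1 / 2) * sin (4 * β) * sin γ * cos γ ^ (2 * n - 2)
    - (1 / 4) * sin (2 * β) ^ 2 * (1 - cos (2 * γ) ^ (2 * n - 2))

theorem pow_le_one_of_abs_le_one {y : ℝ} (hy : |y| ≤ 1) (m : ℕ) : y ^ m ≤ 1 :=
  (le_abs_self _).trans ((abs_pow y m).trans_le (pow_le_one₀ (abs_nonneg y) hy))

theorem two_mul_one_sub_mul_pow_le_one_sub_pow (m : ℕ) {x : ℝ} (hx₀ : 0 ≤ x) (hx₁ : x ≤ 1) :
    2 * m * (1 - x) * x ^ m ≤ 1 - x ^ (2 * m) := by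
  induction m with
  | zero => simp
  | succ m ih =>
    -- the defect `g m = 1 - x^(2m) - 2m(1-x)x^m` satisfies
    -- `g (m+1) = x g m + (1-x)(1 + x^(2m+1) - 2x^(m+1))`, whose last factor is `≥ (1 - x^(m+1))²`
    have hpow : x ^ (2 * m + 2) ≤ x ^ (2 * m + 1) := pow_le_pow_of_le_one hx₀ hx₁ (by omega)
    have hsq : x ^ (2 * m + 2) = (x ^ (m + 1)) ^ 2 := by ring
    have hdefect : 0 ≤ (1 - x) * (1 + x ^ (2 * m + 1) - 2 * x ^ (m + 1)) :=
      mul_nonneg (by linarith) (by nlinarith [sq_nonneg (1 - x ^ (m + 1))])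
    rw [show 2 * (m + 1) = 2 * m + 2 by ring]
    push_cast
    linear_combination mul_le_mul_of_nonneg_left ih hx₀ + hdefect

theorem sq_two_mul_add_three_lt_two_pow {m : ℕ} (hm : 6 ≤ m) :
    (2 * m + 3) ^ 2 < 2 ^ (m + 2) := by
  induction m, hm using Nat.le_induction with
  | base => norm_num
  | succ m hm ih =>
    calc (2 * (m + 1) + 3) ^ 2 < 2 * (2 * m + 3) ^ 2 := by nlinarith
      _ < 2 ^ (m + 1 + 2) := by rw [pow_succ _ (m + 2)]; omega

theorem sq_mul_one_sub_mul_pow_lt {m : ℕ} (hm : 6 ≤ m) {x : ℝ} (hx₀ : 0 ≤ x) (hx₁ : x ≤ 1) :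
    (2 * m + 3) ^ 2 * ((1 - x) * x ^ m) < 4 + (2 * m + 3) * (1 - (2 * x - 1) ^ m) := by
  rcases le_or_gt x (1 / 2) with hx | hx
  · have hT : 0 ≤ 1 - (2 * x - 1) ^ m :=
      sub_nonneg.2 (pow_le_one_of_abs_le_one (abs_le.2 ⟨by linarith, by linarith⟩) m)
    have hK : ((2 * m + 3) ^ 2 : ℝ) < 4 * 2 ^ m := by
      exact_mod_cast (sq_two_mul_add_three_lt_two_pow hm).trans_eq (by ring)
    have hs : (1 - x) * x ^ m ≤ (2 ^ m)⁻¹ := by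
      have : x ^ m ≤ (1 / 2) ^ m := pow_le_pow_left₀ hx₀ hx m
      rw [← inv_pow, ← one_div]
      nlinarith [pow_nonneg hx₀ m]
    calc (2 * m + 3) ^ 2 * ((1 - x) * x ^ m) ≤ (2 * m + 3) ^ 2 * (2 ^ m)⁻¹ := by gcongr
      _ < 4 := by rw [← div_eq_mul_inv, div_lt_iff₀ (by positivity)]; exact hK
      _ ≤ _ := le_add_of_nonneg_right (mul_nonneg (by positivity) hT)
  · have hT : 1 - x ^ (2 * m) ≤ 1 - (2 * x - 1) ^ m := by
      rw [pow_mul]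
      gcongr
      · linarith
      · nlinarith [sq_nonneg (x - 1)]
    have hAMGM := two_mul_one_sub_mul_pow_le_one_sub_pow m hx₀ hx₁
    have hT₁ : 1 - (2 * x - 1) ^ m ≤ 1 := by
      have := pow_nonneg (by linarith : (0 : ℝ) ≤ 2 * x - 1) m
      linarith
    have hm' : (6 : ℝ) ≤ m := by exact_mod_cast hm
    have hs₀ : 0 ≤ (1 - x) * x ^ m := mul_nonneg (by linarith) (pow_nonneg hx₀ m)
    -- with `s = (1 - x) x^m`: `K² s = 2m K s + 3K s`, `2m s ≤ T ≤ 1`, and `3K < 8m` once `m ≥ 6`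
    nlinarith

theorem sq_mul_sin_mul_cos_pow_lt {m : ℕ} (hm : 6 ≤ m) (γ : ℝ) :
    (2 * m + 3) ^ 2 * (sin γ * cos γ ^ m) ^ 2 < 4 + (2 * m + 3) * (1 - cos (2 * γ) ^ m) := by
  have h := sq_mul_one_sub_mul_pow_lt hm (sq_nonneg (cos γ)) (cos_sq_le_one γ)
  rwa [cos_two_mul, mul_pow, ← pow_mul, mul_comm m 2, pow_mul, sin_sq]

theorem quadratic_form_lt_inv {K S T p q : ℝ} (hK : 0 < K) (hT : 0 ≤ T)
    (hpq : p ^ 2 + q ^ 2 = 1) (h : K ^ 2 * S ^ 2 < 4 + K * T) :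
    S * (p * q) - 1 / 4 * p ^ 2 * T < 1 / K := by
  have hKT : 0 < 4 + K * T := by positivity
  have hsos : (1 - (S * (p * q) - 1 / 4 * p ^ 2 * T) * K) * (4 + K * T) =
      q ^ 2 * (4 + K * T - K ^ 2 * S ^ 2) + (p * (4 + K * T) - 2 * K * S * q) ^ 2 / 4 := by
    linear_combination (-(4 + K * T)) * hpq
  have hpos :
      0 < q ^ 2 * (4 + K * T - K ^ 2 * S ^ 2) + (p * (4 + K * T) - 2 * K * S * q) ^ 2 / 4 := by
    rcases eq_or_ne q 0 with rfl | hq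
    · have hp : p ^ 2 = 1 := by simpa using hpq
      rw [mul_zero, sub_zero, mul_pow, hp, one_mul, zero_pow two_ne_zero, zero_mul, zero_add]
      positivity
    · exact add_pos_of_pos_of_nonneg (mul_pos (by positivity) (sub_pos.2 h)) (by positivity)
  rw [lt_div_iff₀ hK]
  nlinarith

theorem qaoaF_eq (n : ℕ) (γ β : ℝ) :
    qaoaF n γ β = sin γ * cos γ ^ (2 * n - 2) * (sin (2 * β) * cos (2 * β))
      - 1 / 4 * sin (2 * β) ^ 2 * (1 - cos (2 * γ) ^ (2 * n - 2)) := by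
  rw [qaoaF, show 4 * β = 2 * (2 * β) by ring, sin_two_mul]
  ring

theorem qaoaF_lt_inv {n : ℕ} (hn : 4 ≤ n) (γ β : ℝ) : qaoaF n γ β < 1 / (4 * n - 1) := by
  have hK : (4 * n - 1 : ℝ) = 2 * (2 * n - 2 : ℕ) + 3 := by
    push_cast [Nat.cast_sub (by omega : 2 ≤ 2 * n)]
    ring
  rw [qaoaF_eq, hK]
  exact quadratic_form_lt_inv (by positivity)
    (sub_nonneg.2 (pow_le_one_of_abs_le_one (abs_cos_le_one _) _)) (sin_sq_add_cos_sq _)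
    (sq_mul_sin_mul_cos_pow_lt (by omega) γ)

theorem div_mul_one_half_add_lt_of_lt_inv {N f : ℝ} (hN : 1 ≤ N) (hf : f < 1 / (4 * N - 1)) :
    (2 * N - 1) / N * (1 / 2 + f) < 1 - 1 / (2 * N * (4 * N - 1)) := by
  have h₁ : 0 < 4 * N - 1 := by linarith
  have hratio : 0 < (2 * N - 1) / N := div_pos (by linarith) (by linarith)
  have hbound :
      1 - 1 / (2 * N * (4 * N - 1)) = (2 * N - 1) / N * (1 / 2 + 1 / (4 * N - 1)) := by
    rw [div_add_div _ _ two_ne_zero h₁.ne', one_sub_div (by positivity), div_mul_div_comm]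
    congr 1 <;> ring
  rw [hbound]
  gcongr

/-- For `n ≥ 4` and all real `γ, β`, the level-1 QAOA approximation ratio on `K_{2n}`,
namely `((2n-1)/n)·(1/2 + f_n(γ,β))`, is `< 1 - 1/(2n(4n-1)) < 1 - 1/(8n²)`. -/
theorem qaoa_ratio_lt (n : ℕ) (hn : 4 ≤ n) (γ β : ℝ) :
    ((2 * (n : ℝ) - 1) / (n : ℝ)) * (1 / 2 + qaoaF n γ β)
        < 1 - 1 / (2 * (n : ℝ) * (4 * (n : ℝ) - 1)) ∧
      1 - 1 / (2 * (n : ℝ) * (4 * (n : ℝ) - 1)) < 1 - 1 / (8 * (n : ℝ) ^ 2) := by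
  have hn' : (4 : ℝ) ≤ n := by exact_mod_cast hn
  refine ⟨div_mul_one_half_add_lt_of_lt_inv (by linarith) (qaoaF_lt_inv hn γ β), ?_⟩
  have h₁ : (0 : ℝ) < 4 * n - 1 := by linarith
  have : 2 * (n : ℝ) * (4 * n - 1) < 8 * n ^ 2 := by linarith
  gcongr 1 - 1 / ?_
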